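/- The bracket [u,v]_I = ∂_1(u)∂_2(v) − ∂_2(u)∂_1(v) + u∂_1(v) − ∂_1(u)v makes A_2 into a Lie algebra over 𝔽 (it is bilinear, alternating, and satisfies the Jacobi identity), and the element x^{σ_1,0} (when σ_1 ∈ Γ) lies in the center of (A_2, [·,·]_I). -/

import Mathlib

/-!
On a monomial, `∂_p` multiplies by `α_p` and lowers `i_p` by one with factor `i_p`; both parts are
additive in the exponent, so each `∂_p` is a derivation of `A_2`, and `∂_1`, `∂_2` commute because
they act on different coordinates. For any two commuting derivations `D₁`, `D₂` of a commutative
algebra, `D₁u D₂v − D₂u D₁v + u D₁v − D₁u v` is bilinear and alternating, and the Jacobi identity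
becomes a polynomial identity once the Leibniz rule is expanded and `D₂D₁` is replaced by `D₁D₂`.
The monomial `x^{σ_1,0}` has `∂_1 x = 0` and `∂_2 x = x`, and for such an element the bracket with
anything cancels.
-/

noncomputable section

open scoped BigOperators
open scoped Classical

variable (F : Type*) [Field F] [CharZero F]

/-- `J = J_1 × ⋯ × J_n` as an additive submonoid of `ℕ^n`. -/
def Jpi (n : ℕ) (Jp : Fin n → AddSubmonoid ℕ) : AddSubmonoid (Fin n → ℕ) :=
  AddSubmonoid.pi Set.univ Jp

/-- The semigroup algebra `A` of `Γ × J` over `𝔽`, with basis `{x^{α,i}}` and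
product `x^{α,i}·x^{β,j} = x^{α+β,i+j}`. -/
abbrev AG (n : ℕ) (Γ : AddSubgroup (Fin n → F)) (Jp : Fin n → AddSubmonoid ℕ) : Type _ :=
  AddMonoidAlgebra F (Γ × Jpi n Jp)

lemma sub_single_mem {n : ℕ} {Jp : Fin n → AddSubmonoid ℕ}
    (hJ : ∀ p, Jp p = ⊥ ∨ Jp p = ⊤) (i : Jpi n Jp) (p : Fin n)
    (h : (i : Fin n → ℕ) p ≠ 0) : ((i : Fin n → ℕ) - Pi.single p 1) ∈ Jpi n Jp := by
  have key : ∀ q : Fin n, (i : Fin n → ℕ) q - (Pi.single p 1 : Fin n → ℕ) q ∈ Jp q := by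
    intro q
    rcases hJ q with hq | hq
    · have hiq : (i : Fin n → ℕ) q ∈ Jp q := i.2 q (Set.mem_univ q)
      rw [hq] at hiq
      simp only [AddSubmonoid.mem_bot] at hiq
      by_cases hpq : q = p
      · subst hpq; exact absurd hiq h
      · rw [hq, AddSubmonoid.mem_bot]
        simp [Pi.single_eq_of_ne hpq, hiq]
    · rw [hq]; trivial
  intro q _
  exact key q

/-- The derivation `∂_p` of `A`, `∂_p(x^{α,i}) = α_p x^{α,i} + i_p x^{α,i-1_[p]}`
(where a term whose exponent falls outside `Γ × J` is treated as `0`). -/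
def ddG (n : ℕ) (Γ : AddSubgroup (Fin n → F)) (Jp : Fin n → AddSubmonoid ℕ)
    (hJ : ∀ p, Jp p = ⊥ ∨ Jp p = ⊤) (p : Fin n) : Module.End F (AG F n Γ Jp) :=
  (AddMonoidAlgebra.coeffLinearEquiv F).symm.toLinearMap ∘ₗ
  (Finsupp.lsum F fun (g : Γ × Jpi n Jp) =>
    ((g.1 : Fin n → F) p) • Finsupp.lsingle g +
    (if h : (g.2 : Fin n → ℕ) p = 0 then 0 else
      (((g.2 : Fin n → ℕ) p : F)) • Finsupp.lsingle
        (g.1, ⟨(g.2 : Fin n → ℕ) - Pi.single p 1, sub_single_mem hJ g.2 p h⟩)))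
  ∘ₗ (AddMonoidAlgebra.coeffLinearEquiv F).toLinearMap

/-- The basis monomial `x^{v,0}`, with the convention that it is `0` if `v ∉ Γ`. -/
def xIf (n : ℕ) (Γ : AddSubgroup (Fin n → F)) (Jp : Fin n → AddSubmonoid ℕ)
    (v : Fin n → F) : AG F n Γ Jp :=
  if h : v ∈ Γ then AddMonoidAlgebra.single ((⟨v, h⟩ : Γ), (0 : Jpi n Jp)) 1 else 0

/-- The bracket `[u,v]_I = ∂_1(u)∂_2(v) − ∂_2(u)∂_1(v) + u∂_1(v) − ∂_1(u)v` on `A_2`. -/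
def brI (Γ : AddSubgroup (Fin 2 → F)) (Jp : Fin 2 → AddSubmonoid ℕ)
    (hJ : ∀ p, Jp p = ⊥ ∨ Jp p = ⊤) (u v : AG F 2 Γ Jp) : AG F 2 Γ Jp :=
  ddG F 2 Γ Jp hJ 0 u * ddG F 2 Γ Jp hJ 1 v - ddG F 2 Γ Jp hJ 1 u * ddG F 2 Γ Jp hJ 0 v
    + u * ddG F 2 Γ Jp hJ 0 v - ddG F 2 Γ Jp hJ 0 u * v


section BracketI

variable {R A : Type*} [CommRing R] [CommRing A] [Algebra R A]

def bracketI (D₁ D₂ : Derivation R A A) (u v : A) : A :=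
  D₁ u * D₂ v - D₂ u * D₁ v + u * D₁ v - D₁ u * v

variable (D₁ D₂ : Derivation R A A)

lemma bracketI_add_left (u v w : A) :
    bracketI D₁ D₂ (u + v) w = bracketI D₁ D₂ u w + bracketI D₁ D₂ v w := by
  simp only [bracketI, map_add]; ring

lemma bracketI_add_right (u v w : A) :
    bracketI D₁ D₂ u (v + w) = bracketI D₁ D₂ u v + bracketI D₁ D₂ u w := by
  simp only [bracketI, map_add]; ring

lemma bracketI_smul_left (c : R) (u v : A) :
    bracketI D₁ D₂ (c • u) v = c • bracketI D₁ D₂ u v := by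
  simp only [bracketI, Derivation.map_smul, smul_mul_assoc, smul_sub, smul_add]

lemma bracketI_smul_right (c : R) (u v : A) :
    bracketI D₁ D₂ u (c • v) = c • bracketI D₁ D₂ u v := by
  simp only [bracketI, Derivation.map_smul, mul_smul_comm, smul_sub, smul_add]

lemma bracketI_self (u : A) : bracketI D₁ D₂ u u = 0 := by
  simp only [bracketI]; ring

lemma bracketI_jacobi (hcomm : ∀ a, D₂ (D₁ a) = D₁ (D₂ a)) (u v w : A) :
    bracketI D₁ D₂ u (bracketI D₁ D₂ v w) + bracketI D₁ D₂ v (bracketI D₁ D₂ w u)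
      + bracketI D₁ D₂ w (bracketI D₁ D₂ u v) = 0 := by
  simp only [bracketI, map_sub, map_add, Derivation.leibniz, smul_eq_mul, hcomm]
  ring

lemma bracketI_eq_zero_of_eigen {a : A} (h₁ : D₁ a = 0) (h₂ : D₂ a = a) (v : A) :
    bracketI D₁ D₂ a v = 0 := by
  simp only [bracketI, h₁, h₂]; ring

end BracketI

section PartialDerivatives

variable {K : Type*} [Field K] {n : ℕ} {Γ : AddSubgroup (Fin n → K)} {Jp : Fin n → AddSubmonoid ℕ}

lemma tsub_single_mem_Jpi (hJ : ∀ p, Jp p = ⊥ ∨ Jp p = ⊤) (i : Jpi n Jp) (p : Fin n) :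
    (i : Fin n → ℕ) - Pi.single p 1 ∈ Jpi n Jp := by
  by_cases h : (i : Fin n → ℕ) p = 0
  · convert i.2 using 1
    funext q
    rcases eq_or_ne q p with rfl | hq <;> simp [*]
  · exact sub_single_mem hJ i p h

variable (hJ : ∀ p, Jp p = ⊥ ∨ Jp p = ⊤)

-- `i - 1_[p]` is truncated subtraction; it only occurs next to the factor `i_p`, which vanishes
-- exactly when the truncation bites.
def lowerJ (p : Fin n) (g : Γ × Jpi n Jp) : Γ × Jpi n Jp :=
  (g.1, ⟨(g.2 : Fin n → ℕ) - Pi.single p 1, tsub_single_mem_Jpi hJ g.2 p⟩)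

lemma lowerJ_fst (p : Fin n) (g : Γ × Jpi n Jp) : (lowerJ hJ p g).1 = g.1 := rfl

lemma lowerJ_snd_apply_of_ne {p q : Fin n} (h : q ≠ p) (g : Γ × Jpi n Jp) :
    ((lowerJ hJ p g).2 : Fin n → ℕ) q = (g.2 : Fin n → ℕ) q := by
  simp [lowerJ, h]

lemma lowerJ_comm (p q : Fin n) (g : Γ × Jpi n Jp) :
    lowerJ hJ p (lowerJ hJ q g) = lowerJ hJ q (lowerJ hJ p g) := by
  refine Prod.ext rfl (Subtype.ext (funext fun r => ?_))
  simp only [lowerJ, Pi.sub_apply]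
  omega

lemma natCast_smul_single_lowerJ_add (p : Fin n) (a c : Γ × Jpi n Jp) (x : K) :
    ((a.2 : Fin n → ℕ) p : K) • AddMonoidAlgebra.single (lowerJ hJ p a + c) x
      = ((a.2 : Fin n → ℕ) p : K) • AddMonoidAlgebra.single (lowerJ hJ p (a + c)) x := by
  by_cases h : (a.2 : Fin n → ℕ) p = 0
  · simp [h]
  · congr 2
    refine Prod.ext rfl (Subtype.ext (funext fun q => ?_))
    rcases eq_or_ne q p with rfl | hq
    · simp [lowerJ]; omega
    · simp [lowerJ, hq]

lemma ddG_single (p : Fin n) (g : Γ × Jpi n Jp) (c : K) :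
    ddG K n Γ Jp hJ p (AddMonoidAlgebra.single g c)
      = ((g.1 : Fin n → K) p) • AddMonoidAlgebra.single g c
        + ((g.2 : Fin n → ℕ) p : K) • AddMonoidAlgebra.single (lowerJ hJ p g) c := by
  apply (AddMonoidAlgebra.coeffLinearEquiv K).injective
  by_cases h : (g.2 : Fin n → ℕ) p = 0
  · simp [ddG, h]
  · simp [ddG, h, lowerJ]

lemma ddG_single_mul_single (p : Fin n) (a c : Γ × Jpi n Jp) (x y : K) :
    ddG K n Γ Jp hJ p (AddMonoidAlgebra.single a x * AddMonoidAlgebra.single c y)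
      = ddG K n Γ Jp hJ p (AddMonoidAlgebra.single a x) * AddMonoidAlgebra.single c y
        + AddMonoidAlgebra.single a x * ddG K n Γ Jp hJ p (AddMonoidAlgebra.single c y) := by
  have hc := natCast_smul_single_lowerJ_add hJ p c a (x * y)
  rw [add_comm c a] at hc
  simp only [AddMonoidAlgebra.single_mul_single, ddG_single, add_mul, mul_add, smul_mul_assoc,
    mul_smul_comm]
  rw [natCast_smul_single_lowerJ_add, add_comm a (lowerJ hJ p c), hc]
  simp only [Prod.fst_add, Prod.snd_add, AddSubgroup.coe_add, AddSubmonoid.coe_add, Pi.add_apply,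
    Nat.cast_add, add_smul]
  abel

lemma ddG_mul (p : Fin n) (u v : AG K n Γ Jp) :
    ddG K n Γ Jp hJ p (u * v) = ddG K n Γ Jp hJ p u * v + u * ddG K n Γ Jp hJ p v := by
  induction u using AddMonoidAlgebra.induction_linear with
  | zero => simp
  | add u₁ u₂ h₁ h₂ => simp only [add_mul, map_add, h₁, h₂]; ring
  | single a x =>
    induction v using AddMonoidAlgebra.induction_linear with
    | zero => simp
    | add v₁ v₂ h₁ h₂ => simp only [mul_add, map_add, h₁, h₂]; ring
    | single c y => exact ddG_single_mul_single hJ p a c x y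

lemma ddG_comm (p q : Fin n) (u : AG K n Γ Jp) :
    ddG K n Γ Jp hJ p (ddG K n Γ Jp hJ q u) = ddG K n Γ Jp hJ q (ddG K n Γ Jp hJ p u) := by
  rcases eq_or_ne p q with rfl | hpq
  · rfl
  induction u using AddMonoidAlgebra.induction_linear with
  | zero => simp
  | add u₁ u₂ h₁ h₂ => simp only [map_add, h₁, h₂]
  | single g x =>
    simp only [ddG_single, map_add, map_smul, lowerJ_fst, lowerJ_snd_apply_of_ne hJ hpq,
      lowerJ_snd_apply_of_ne hJ hpq.symm, lowerJ_comm hJ p q]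
    module

def ddGDerivation (p : Fin n) : Derivation K (AG K n Γ Jp) (AG K n Γ Jp) :=
  Derivation.mk' (ddG K n Γ Jp hJ p) fun u v => by
    rw [ddG_mul, smul_eq_mul, smul_eq_mul, add_comm, mul_comm v]

lemma ddG_xIf (p : Fin n) (v : Fin n → K) :
    ddG K n Γ Jp hJ p (xIf K n Γ Jp v) = v p • xIf K n Γ Jp v := by
  unfold xIf
  split_ifs with hv
  · simp [ddG_single]
  · simp

end PartialDerivatives

lemma brI_eq_bracketI {K : Type*} [Field K] (Γ : AddSubgroup (Fin 2 → K))
    (Jp : Fin 2 → AddSubmonoid ℕ) (hJ : ∀ p, Jp p = ⊥ ∨ Jp p = ⊤) :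
    brI K Γ Jp hJ = bracketI (ddGDerivation hJ 0) (ddGDerivation hJ 1) :=
  rfl

theorem brI_lie_and_central (Γ : AddSubgroup (Fin 2 → F)) (Jp : Fin 2 → AddSubmonoid ℕ)
    (hJ : ∀ p, Jp p = ⊥ ∨ Jp p = ⊤) :
    (∀ u v w : AG F 2 Γ Jp, brI F Γ Jp hJ (u + v) w = brI F Γ Jp hJ u w + brI F Γ Jp hJ v w) ∧
    (∀ (c : F) (u v : AG F 2 Γ Jp), brI F Γ Jp hJ (c • u) v = c • brI F Γ Jp hJ u v) ∧
    (∀ u v w : AG F 2 Γ Jp, brI F Γ Jp hJ u (v + w) = brI F Γ Jp hJ u v + brI F Γ Jp hJ u w) ∧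
    (∀ (c : F) (u v : AG F 2 Γ Jp), brI F Γ Jp hJ u (c • v) = c • brI F Γ Jp hJ u v) ∧
    (∀ u : AG F 2 Γ Jp, brI F Γ Jp hJ u u = 0) ∧
    (∀ u v w : AG F 2 Γ Jp,
      brI F Γ Jp hJ u (brI F Γ Jp hJ v w) + brI F Γ Jp hJ v (brI F Γ Jp hJ w u)
        + brI F Γ Jp hJ w (brI F Γ Jp hJ u v) = 0) ∧
    (∀ _h : (![0, 1] : Fin 2 → F) ∈ Γ, ∀ u : AG F 2 Γ Jp,
      brI F Γ Jp hJ (xIf F 2 Γ Jp ![0, 1]) u = 0) := by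
  set D₁ := ddGDerivation (Γ := Γ) hJ 0
  set D₂ := ddGDerivation (Γ := Γ) hJ 1
  have hcomm (a : AG F 2 Γ Jp) : D₂ (D₁ a) = D₁ (D₂ a) := ddG_comm hJ 1 0 a
  have hσ₁ : D₁ (xIf F 2 Γ Jp ![0, 1]) = 0 :=
    (ddG_xIf hJ 0 _).trans (zero_smul F _)
  have hσ₂ : D₂ (xIf F 2 Γ Jp ![0, 1]) = xIf F 2 Γ Jp ![0, 1] :=
    (ddG_xIf hJ 1 _).trans (one_smul F _)
  rw [brI_eq_bracketI]
  exact ⟨bracketI_add_left D₁ D₂, bracketI_smul_left D₁ D₂, bracketI_add_right D₁ D₂,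
    bracketI_smul_right D₁ D₂, bracketI_self D₁ D₂, bracketI_jacobi D₁ D₂ hcomm,
    fun _ => bracketI_eq_zero_of_eigen D₁ D₂ hσ₁ hσ₂⟩
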